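/- Let H satisfy the Class 1 conditions with limit H₀ > 0 and sound-speed constant κ = (3/2)(1 + g'(0)) > 0. Then there exists a continuously differentiable function w : [H₀, ∞) → ℝ such that H'(t) = w(H(t)) for all t > 0, w(ξ) < 0 for all ξ > H₀, w(H₀) = 0, and w'(H₀) = −2H₀κ. Moreover w extends to a C¹ function on all of ℝ (for instance by setting w(H₀ − ξ) = −w(H₀ + ξ) for ξ > 0). -/

import Mathlib

open Real Filter Set

noncomputable section

/-- The Schwarzschild factor `f(r) = 1 - 2m/r`. -/
def mcf (m r : ℝ) : ℝ := 1 - 2*m/r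

/-- Definition 1: expanding McVittie spacetime with a big bang background.
`H` is C² on `(0,∞)`, positive, strictly decreasing (`H' < 0`), and satisfies the
big bang condition `∫_t^{t₀} H → +∞` as `t → 0⁺`. -/
def Def1 (H : ℝ → ℝ) : Prop :=
  ContDiffOn ℝ 2 H (Set.Ioi 0) ∧
  (∀ t > 0, 0 < H t) ∧
  (∀ t > 0, deriv H t < 0) ∧
  (∀ t₀ > 0, Tendsto (fun t => ∫ u in t..t₀, H u) (nhdsWithin 0 (Set.Ioi 0)) atTop)

/-- The causal geodesic system of the McVittie metric with mass `m`, angular momentum `ℓ`,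
causality parameter `ε` (0 for null, -1 for timelike) and Hubble function `H`,
for functions `t, r` with derivatives `t', r'` on a set `D` of parameter values:
the two second order equations, the first integral, and the constraints
`t > 0`, `r > 2m`, `t' > 0`. -/
def IsGeodesic (m ℓ ε : ℝ) (H t r t' r' : ℝ → ℝ) (D : Set ℝ) : Prop :=
  ∀ s ∈ D,
    0 < t s ∧ 2*m < r s ∧ 0 < t' s ∧
    HasDerivAt t (t' s) s ∧ HasDerivAt r (r' s) s ∧
    HasDerivAt r' (r s * Real.sqrt (mcf m (r s)) * deriv H (t s) * (t' s)^2
        + (1 - 3*m / r s) * ℓ^2 / (r s)^3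
        + ε * (m / (r s)^2 - r s * (H (t s))^2)) s ∧
    HasDerivAt t' (-(1 - 3*m / r s) * (Real.sqrt (mcf m (r s)))⁻¹ * H (t s) * (t' s)^2
        - (2*m / (r s)^2) * (mcf m (r s))⁻¹ * t' s * r' s
        - ε * (Real.sqrt (mcf m (r s)))⁻¹ * H (t s)) s ∧
    (-(mcf m (r s) - (r s)^2 * (H (t s))^2) * (t' s)^2
        - 2 * r s * (Real.sqrt (mcf m (r s)))⁻¹ * H (t s) * t' s * r' s
        + (mcf m (r s))⁻¹ * (r' s)^2 + ℓ^2 / (r s)^2 = ε)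

/-- Domain `[0, sω)` of a future-directed geodesic, with `sω` a possibly infinite endpoint. -/
def GeoDomF (sω : EReal) : Set ℝ := {s : ℝ | 0 ≤ s ∧ (s : EReal) < sω}

/-- A geodesic on its right-maximal interval of existence `[0, sω)`:
a solution which admits no extension to any strictly larger interval `[0, sω₂)`. -/
def MaxFutureGeodesic (m ℓ ε : ℝ) (H t r t' r' : ℝ → ℝ) (sω : EReal) : Prop :=
  0 < sω ∧ IsGeodesic m ℓ ε H t r t' r' (GeoDomF sω) ∧
  ¬ ∃ (sω₂ : EReal) (t₂ r₂ t₂' r₂' : ℝ → ℝ), sω < sω₂ ∧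
      IsGeodesic m ℓ ε H t₂ r₂ t₂' r₂' (GeoDomF sω₂) ∧
      ∀ s ∈ GeoDomF sω, t₂ s = t s ∧ r₂ s = r s ∧ t₂' s = t' s ∧ r₂' s = r' s

/-- Class 1 conditions: Definition 1 together with `H → H₀ > 0`, `H' → 0`, `H'' → 0`
at late times, a C¹ equation of state `p₀ = g(ρ₀)` (with cosmological constant `Λ = 3H₀²`)
with sound-speed constant `κ = (3/2)(1 + g'(0)) > 0`, and the horizon existence condition
`m·H₀ < 1/(3√3)`. -/
def Class1 (m H₀ κ : ℝ) (H g : ℝ → ℝ) : Prop :=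
  Def1 H ∧ 0 < H₀ ∧
  Tendsto H atTop (nhds H₀) ∧
  Tendsto (deriv H) atTop (nhds 0) ∧
  Tendsto (deriv (deriv H)) atTop (nhds 0) ∧
  ContDiffOn ℝ 1 g (Set.Ici 0) ∧
  (∀ t > 0, (-2 * deriv H t - 3 * (H t)^2 + 3*H₀^2) / (8*π)
      = g ((3*(H t)^2 - 3*H₀^2) / (8*π))) ∧
  κ = 3/2 * (1 + derivWithin g (Set.Ici 0) 0) ∧ 0 < κ ∧
  m * H₀ < 1 / (3*Real.sqrt 3)

/-- Class 2 conditions: Definition 1 together with `H → 0`, `H' → 0`, `H'' → 0`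
at late times and a C² equation of state `p₀ = g(ρ₀)` (with `Λ = 0`)
with sound-speed constant `κ = (3/2)(1 + g'(0)) > 0`. -/
def Class2 (κ : ℝ) (H g : ℝ → ℝ) : Prop :=
  Def1 H ∧
  Tendsto H atTop (nhds 0) ∧
  Tendsto (deriv H) atTop (nhds 0) ∧
  Tendsto (deriv (deriv H)) atTop (nhds 0) ∧
  ContDiffOn ℝ 2 g (Set.Ici 0) ∧
  (∀ t > 0, (-2 * deriv H t - 3 * (H t)^2) / (8*π) = g ((3*(H t)^2) / (8*π))) ∧
  κ = 3/2 * (1 + derivWithin g (Set.Ici 0) 0) ∧ 0 < κ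

/-- `R` solves the ingoing radial null geodesic equation
`dr/dt = r·H(t)·√(1 − 2m/r) − (1 − 2m/r)` on `D`, staying in `r > 2m`. -/
def SolvesIRNG (m : ℝ) (H R : ℝ → ℝ) (D : Set ℝ) : Prop :=
  ∀ u ∈ D, 2*m < R u ∧
    HasDerivAt R (R u * H u * Real.sqrt (1 - 2*m / R u) - (1 - 2*m / R u)) u

/-- `R` solves the outgoing radial null geodesic equation
`dr/dt = r·H(t)·√(1 − 2m/r) + (1 − 2m/r)` on `D`, staying in `r > 2m`. -/
def SolvesORNG (m : ℝ) (H R : ℝ → ℝ) (D : Set ℝ) : Prop :=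
  ∀ u ∈ D, 2*m < R u ∧
    HasDerivAt R (R u * H u * Real.sqrt (1 - 2*m / R u) + (1 - 2*m / R u)) u

/-- The ingoing condition `f(r)·r' = (r·f(r)^{−1/2}·H(t) − 1)·f(r)·t'` along a null geodesic. -/
def IngoingOn (m : ℝ) (H t r t' r' : ℝ → ℝ) (D : Set ℝ) : Prop :=
  ∀ s ∈ D, mcf m (r s) * r' s
    = (r s * (Real.sqrt (mcf m (r s)))⁻¹ * H (t s) - 1) * mcf m (r s) * t' s

/-- The outgoing condition `f(r)⁻¹·r' = (r·f(r)^{−1/2}·H(t) + 1)·t'` along a null geodesic. -/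
def OutgoingOn (m : ℝ) (H t r t' r' : ℝ → ℝ) (D : Set ℝ) : Prop :=
  ∀ s ∈ D, (mcf m (r s))⁻¹ * r' s
    = (r s * (Real.sqrt (mcf m (r s)))⁻¹ * H (t s) + 1) * t' s

/-- The point `(t, r)` lies in the anti-trapped region: `r > 2m` and `H(t) > (1/r)√(1 − 2m/r)`. -/
def AntiTrapped (m : ℝ) (H : ℝ → ℝ) (u rr : ℝ) : Prop :=
  2*m < rr ∧ 1 / rr * Real.sqrt (1 - 2*m/rr) < H u

/-!
By the definitions of `ρ₀` and `p₀`, `H' = −4π(ρ₀ + p₀) = −4π(ρ₀ + g(ρ₀))`, and `ρ₀` depends on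
`t` only through `H(t)`; so `w(ξ) = −4π(ρ₀(ξ) + g(ρ₀(ξ)))` works, after continuing `g` affinely to
`ρ < 0` to make `w` C¹ on all of `ℝ`. Letting `t → ∞` in the equation of state gives `g(0) = 0`,
hence `w(H₀) = 0`, and the chain rule gives `w'(H₀) = −3H₀(1 + g'(0)) = −2H₀κ`. Finally `w < 0`
on `(H₀, ∞)` because `H' < 0` and `H` maps `(0, ∞)` onto `(H₀, ∞)`: it decreases to `H₀`, and the
big bang condition makes it unbounded near `0`.
-/

theorem exists_contDiff_extension_of_contDiffOn_Ici {E : Type*} [NormedAddCommGroup E]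
    [NormedSpace ℝ E] {g : ℝ → E} {a : ℝ} (hg : ContDiffOn ℝ 1 g (Ici a)) :
    ∃ G : ℝ → E, ContDiff ℝ 1 G ∧ EqOn G g (Ici a) ∧
      HasDerivAt G (derivWithin g (Ici a) a) a := by
  set g' := derivWithin g (Ici a)
  have hmax : Continuous (fun x : ℝ => max x a) := continuous_id.max continuous_const
  have hmem : ∀ x, max x a ∈ Ici a := fun x => le_max_right x a
  set G : ℝ → E := fun x => g (max x a) + (min x a - a) • g' a
  set D : ℝ → E := fun x => g' (max x a)
  have hGc : Continuous G :=
    (hg.continuousOn.comp_continuous hmax hmem).add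
      (((continuous_id.min continuous_const).sub continuous_const).smul continuous_const)
  have hDc : Continuous D :=
    (hg.continuousOn_derivWithin (uniqueDiffOn_Ici a) le_rfl).comp_continuous hmax hmem
  have hG_ne : ∀ x ≠ a, HasDerivAt G (D x) x := by
    intro x hx
    rcases hx.lt_or_gt with hlt | hgt
    · have hloc : G =ᶠ[nhds x] fun y => g a + (y - a) • g' a := by
        filter_upwards [Iio_mem_nhds hlt] with y (hy : y < a)
        simp [G, max_eq_right hy.le, min_eq_left hy.le]
      have hlin : HasDerivAt (fun y => g a + (y - a) • g' a) (g' a) x := by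
        simpa using (((hasDerivAt_id x).sub_const a).smul_const (g' a)).const_add (g a)
      simpa [D, max_eq_right hlt.le] using hlin.congr_of_eventuallyEq hloc
    · have hloc : G =ᶠ[nhds x] g := by
        filter_upwards [Ioi_mem_nhds hgt] with y (hy : a < y)
        simp [G, max_eq_left hy.le, min_eq_right hy.le]
      have hgx : HasDerivAt g (g' x) x :=
        ((hg.differentiableOn one_ne_zero x hgt.le).hasDerivWithinAt).hasDerivAt
          (Ici_mem_nhds hgt)
      simpa [D, max_eq_left hgt.le] using hgx.congr_of_eventuallyEq hloc
  have hG : ∀ x, HasDerivAt G (D x) x :=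
    hasDerivAt_of_hasDerivAt_of_ne' hG_ne hGc.continuousAt hDc.continuousAt
  refine ⟨G, ?_, fun x (hx : a ≤ x) => by simp [G, max_eq_left hx, min_eq_right hx], ?_⟩
  · rw [contDiff_one_iff_deriv]
    exact ⟨fun x => (hG x).differentiableAt, by rwa [funext fun x => (hG x).deriv]⟩
  · simpa [D] using hG a

theorem AntitoneOn.le_of_tendsto_atTop {α β : Type*} [LinearOrder α] [Preorder β]
    [TopologicalSpace β] [OrderClosedTopology β] {f : α → β} {a : α} {L : β}
    (hf : AntitoneOn f (Ioi a)) (hlim : Tendsto f atTop (nhds L)) {t : α} (ht : a < t) :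
    L ≤ f t :=
  haveI : Nonempty α := ⟨t⟩
  le_of_tendsto hlim <| (eventually_ge_atTop t).mono fun _ hs => hf ht (ht.trans_le hs) hs

theorem AntitoneOn.exists_lt_of_tendsto_intervalIntegral {H : ℝ → ℝ} {b c : ℝ}
    (hcb : c < b) (hH : AntitoneOn H (Ioc c b))
    (hint : Tendsto (fun t => ∫ u in t..b, H u) (nhdsWithin c (Ioi c)) atTop) (ξ : ℝ) :
    ∃ a ∈ Ioo c b, ξ < H a := by
  set M := max ξ 0
  obtain ⟨a, hMa, ha⟩ := ((hint.eventually_gt_atTop ((b - c) * M)).and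
    (Ioo_mem_nhdsGT hcb)).exists
  refine ⟨a, ha, ?_⟩
  have hab : a ≤ b := ha.2.le
  have hsub : Icc a b ⊆ Ioc c b := fun u hu => ⟨ha.1.trans_le hu.1, hu.2⟩
  have hbound : ∫ u in a..b, H u ≤ (b - a) * H a := by
    calc ∫ u in a..b, H u ≤ ∫ _ in a..b, H a :=
          intervalIntegral.integral_mono_on hab
            ((hH.mono (uIcc_of_le hab ▸ hsub)).intervalIntegrable) intervalIntegrable_const
            fun u hu => hH (hsub ⟨le_rfl, hab⟩) (hsub hu) hu.1
      _ = (b - a) * H a := by simp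
  by_contra! hle
  have : (b - a) * H a ≤ (b - c) * M :=
    calc (b - a) * H a ≤ (b - a) * M :=
          mul_le_mul_of_nonneg_left (hle.trans (le_max_left ξ 0)) (by linarith)
      _ ≤ (b - c) * M := mul_le_mul_of_nonneg_right (by linarith [ha.1]) (le_max_right ξ 0)
  linarith

theorem surjOn_Ioi_of_tendsto_intervalIntegral {H : ℝ → ℝ} {H₀ : ℝ}
    (hcont : ContinuousOn H (Ioi 0)) (hanti : AntitoneOn H (Ioi 0))
    (hlim : Tendsto H atTop (nhds H₀))
    (hint : Tendsto (fun t => ∫ u in t..1, H u) (nhdsWithin 0 (Ioi 0)) atTop) :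
    SurjOn H (Ioi 0) (Ioi H₀) := by
  intro ξ (hξ : H₀ < ξ)
  obtain ⟨a, ha, hξa⟩ := (hanti.mono Ioc_subset_Ioi_self).exists_lt_of_tendsto_intervalIntegral
    one_pos hint ξ
  obtain ⟨b, hbξ, hab⟩ :=
    ((hlim.eventually (Iio_mem_nhds hξ)).and (eventually_gt_atTop a)).exists
  obtain ⟨t, ht, rfl⟩ := intermediate_value_Icc' hab.le
    (hcont.mono fun u hu => ha.1.trans_le hu.1) ⟨hbξ.le, hξa.le⟩
  exact ⟨t, ha.1.trans_le ht.1, rfl⟩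

/-- The paper's `ρ₀`, as a function of the Hubble rate `ξ = H(t)`. -/
def matterDensity (H₀ ξ : ℝ) : ℝ := (3 * ξ ^ 2 - 3 * H₀ ^ 2) / (8 * π)

theorem matterDensity_self (H₀ : ℝ) : matterDensity H₀ H₀ = 0 := by
  simp [matterDensity]

theorem matterDensity_nonneg {H₀ ξ : ℝ} (h₀ : 0 ≤ H₀) (h : H₀ ≤ ξ) : 0 ≤ matterDensity H₀ ξ := by
  have : H₀ ^ 2 ≤ ξ ^ 2 := pow_le_pow_left₀ h₀ h 2
  exact div_nonneg (by linarith) (by positivity)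

theorem hasDerivAt_matterDensity (H₀ ξ : ℝ) :
    HasDerivAt (matterDensity H₀) (3 * ξ / (4 * π)) ξ := by
  have h := (((hasDerivAt_pow 2 ξ).const_mul 3).sub_const (3 * H₀ ^ 2)).div_const (8 * π)
  exact h.congr_deriv (by field_simp; ring)

theorem contDiff_matterDensity (H₀ : ℝ) : ContDiff ℝ 1 (matterDensity H₀) := by
  unfold matterDensity
  fun_prop

theorem eos_apply_zero {H g : ℝ → ℝ} {H₀ : ℝ} (hlim : Tendsto H atTop (nhds H₀))
    (hlim' : Tendsto (deriv H) atTop (nhds 0)) (hg : ContinuousWithinAt g (Ici 0) 0)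
    (hρ : ∀ t > 0, 0 ≤ matterDensity H₀ (H t))
    (heos : ∀ t > (0:ℝ), (-2 * deriv H t - 3 * (H t)^2 + 3*H₀^2) / (8*π)
        = g (matterDensity H₀ (H t))) :
    g 0 = 0 := by
  have hρlim : Tendsto (fun t => matterDensity H₀ (H t)) atTop (nhdsWithin 0 (Ici 0)) :=
    tendsto_nhdsWithin_iff.2
      ⟨((contDiff_matterDensity H₀).continuous.tendsto' H₀ 0 (matterDensity_self H₀)).comp hlim,
        (eventually_gt_atTop 0).mono hρ⟩
  have hp : Tendsto (fun t => (-2 * deriv H t - 3 * (H t)^2 + 3*H₀^2) / (8*π)) atTop (nhds 0) := by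
    convert (((hlim'.const_mul (-2)).sub ((hlim.pow 2).const_mul 3)).add_const
      (3 * H₀ ^ 2)).div_const (8 * π) using 2
    ring
  exact tendsto_nhds_unique (hg.tendsto.comp hρlim) (hp.congr' ((eventually_gt_atTop 0).mono heos))

/-- The paper's `w`: the right-hand side of `H' = −4π(ρ₀ + p₀)` with `p₀ = G(ρ₀)`. -/
def hubbleSlope (H₀ : ℝ) (G : ℝ → ℝ) (ξ : ℝ) : ℝ :=
  -4 * π * (matterDensity H₀ ξ + G (matterDensity H₀ ξ))

theorem contDiff_hubbleSlope {G : ℝ → ℝ} (H₀ : ℝ) (hG : ContDiff ℝ 1 G) :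
    ContDiff ℝ 1 (hubbleSlope H₀ G) :=
  contDiff_const.mul ((contDiff_matterDensity H₀).add (hG.comp (contDiff_matterDensity H₀)))

theorem hasDerivAt_hubbleSlope {G : ℝ → ℝ} {c : ℝ} (H₀ : ℝ) (hG : HasDerivAt G c 0) :
    HasDerivAt (hubbleSlope H₀ G) (-3 * H₀ * (1 + c)) H₀ := by
  have hρ := hasDerivAt_matterDensity H₀ H₀
  have hGρ : HasDerivAt (fun ξ => G (matterDensity H₀ ξ)) (c * (3 * H₀ / (4 * π))) H₀ :=
    (matterDensity_self H₀ ▸ hG).comp H₀ hρ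
  exact ((hρ.add hGρ).const_mul (-4 * π)).congr_deriv (by field_simp)

theorem deriv_eq_hubbleSlope {H g G : ℝ → ℝ} {H₀ : ℝ} (hGg : EqOn G g (Ici 0))
    (hρ : ∀ t > 0, 0 ≤ matterDensity H₀ (H t))
    (heos : ∀ t > (0:ℝ), (-2 * deriv H t - 3 * (H t)^2 + 3*H₀^2) / (8*π)
        = g (matterDensity H₀ (H t))) {t : ℝ} (ht : 0 < t) :
    deriv H t = hubbleSlope H₀ G (H t) := by
  rw [hubbleSlope, hGg (hρ t ht), ← heos t ht, matterDensity]
  field_simp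
  ring

theorem class1_w_function
    (H₀ κ : ℝ) (H g : ℝ → ℝ)
    (hH : Def1 H) (hH₀ : 0 < H₀)
    (hlim : Tendsto H atTop (nhds H₀))
    (hlim' : Tendsto (deriv H) atTop (nhds 0))
    (hg : ContDiffOn ℝ 1 g (Set.Ici 0))
    (heos : ∀ t > (0:ℝ), (-2 * deriv H t - 3 * (H t)^2 + 3*H₀^2) / (8*π)
        = g ((3*(H t)^2 - 3*H₀^2) / (8*π)))
    (hκ : κ = 3/2 * (1 + derivWithin g (Set.Ici 0) 0)) :
    ∃ w : ℝ → ℝ, ContDiff ℝ 1 w ∧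
      (∀ t > (0:ℝ), deriv H t = w (H t)) ∧
      (∀ ξ > H₀, w ξ < 0) ∧
      w H₀ = 0 ∧ deriv w H₀ = -2*H₀*κ := by
  obtain ⟨hsm, -, hder, hBB⟩ := hH
  have hanti : StrictAntiOn H (Ioi 0) :=
    strictAntiOn_of_deriv_neg (convex_Ioi 0) hsm.continuousOn
      (by rw [interior_Ioi]; exact hder)
  have hρ : ∀ t > 0, 0 ≤ matterDensity H₀ (H t) := fun t ht =>
    matterDensity_nonneg hH₀.le (hanti.antitoneOn.le_of_tendsto_atTop hlim ht)
  have hg0 : g 0 = 0 :=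
    eos_apply_zero hlim hlim' (hg.continuousOn.continuousWithinAt self_mem_Ici) hρ heos
  obtain ⟨G, hG, hGg, hG0⟩ := exists_contDiff_extension_of_contDiffOn_Ici hg
  have hw : ∀ t > 0, deriv H t = hubbleSlope H₀ G (H t) := fun t ht =>
    deriv_eq_hubbleSlope hGg hρ heos ht
  refine ⟨hubbleSlope H₀ G, contDiff_hubbleSlope H₀ hG, hw, ?_, ?_, ?_⟩
  · intro ξ hξ
    obtain ⟨t, ht, rfl⟩ := surjOn_Ioi_of_tendsto_intervalIntegral hsm.continuousOn
      hanti.antitoneOn hlim (hBB 1 one_pos) hξ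
    exact hw t ht ▸ hder t ht
  · simp [hubbleSlope, matterDensity_self, hGg self_mem_Ici, hg0]
  · rw [(hasDerivAt_hubbleSlope H₀ hG0).deriv, hκ]
    ring
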